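/- For any formulas A and B, the following inversion rules are strongly admissible in Grz_∞ + cut: (li_{A→B}) from Γ, A→B ⇒ Δ infer Γ, B ⇒ Δ; (ri_{A→B}) from Γ, A→B ⇒ Δ infer Γ ⇒ A, Δ; (i_{A→B}) from Γ ⇒ A→B, Δ infer Γ, A ⇒ B, Δ; (i_⊥) from Γ ⇒ ⊥, Δ infer Γ ⇒ Δ; (li_{□A}) from Γ ⇒ □A, Δ infer Γ ⇒ A, Δ. That is, for each of these rules there is a non-expansive adequate mapping u : P → P sending every ∞-proof of the premise to an ∞-proof of the conclusion with |u(π)| ≤ |π|. -/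

import Mathlib

/-- Modal formulas built from ⊥ and propositional variables using → and □. -/
inductive Fml : Type
  | bot : Fml
  | var : ℕ → Fml
  | imp : Fml → Fml → Fml
  | box : Fml → Fml
deriving DecidableEq

/-- A sequent `Γ ⇒ Δ`: a pair of finite multisets of formulas. -/
abbrev Sequent : Type := Multiset Fml × Multiset Fml

/-- Tags for the inference rules of `Grz_∞ (+ cut)`. -/
inductive RuleTag : Type
  | ax | axBot | impL | impR | refl | box | cut
deriving DecidableEq

/-- Local correctness of a rule application in `Grz_∞` (cut allowed when the
Boolean parameter is `true`): it relates the conclusion sequent, the rule tag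
and the (optional) first and second premises.  For the rule `(□)`, the second
premise is its right premise. -/
inductive Rules : Bool → Sequent → RuleTag → Option Sequent → Option Sequent → Prop
  | ax (c : Bool) (Γ Δ : Multiset Fml) (p : ℕ) :
      Rules c (Fml.var p ::ₘ Γ, Fml.var p ::ₘ Δ) RuleTag.ax none none
  | axBot (c : Bool) (Γ Δ : Multiset Fml) :
      Rules c (Fml.bot ::ₘ Γ, Δ) RuleTag.axBot none none
  | impL (c : Bool) (Γ Δ : Multiset Fml) (A B : Fml) :
      Rules c (Fml.imp A B ::ₘ Γ, Δ) RuleTag.impL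
        (some (B ::ₘ Γ, Δ)) (some (Γ, A ::ₘ Δ))
  | impR (c : Bool) (Γ Δ : Multiset Fml) (A B : Fml) :
      Rules c (Γ, Fml.imp A B ::ₘ Δ) RuleTag.impR
        (some (A ::ₘ Γ, B ::ₘ Δ)) none
  | refl (c : Bool) (Γ Δ : Multiset Fml) (B : Fml) :
      Rules c (Fml.box B ::ₘ Γ, Δ) RuleTag.refl
        (some (B ::ₘ Fml.box B ::ₘ Γ, Δ)) none
  | box (c : Bool) (Γ Φ Δ : Multiset Fml) (A : Fml) :
      Rules c (Γ + Φ.map Fml.box, Fml.box A ::ₘ Δ) RuleTag.box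
        (some (Γ + Φ.map Fml.box, A ::ₘ Δ)) (some (Φ.map Fml.box, ({A} : Multiset Fml)))
  | cut (Γ Δ : Multiset Fml) (A : Fml) :
      Rules true (Γ, Δ) RuleTag.cut (some (Γ, A ::ₘ Δ)) (some (A ::ₘ Γ, Δ))

/-- An ∞-proof in `Grz_∞` (`c = false`) or `Grz_∞ + cut` (`c = true`): a
possibly infinite tree (nodes are adressed by lists of Booleans, `false`
pointing to the first premise and `true` to the second premise) of sequents
together with applied rules, constructed according to the rules, whose leaves
are initial sequents, and in which every infinite branch passes through a
right premise of the rule `(□)` infinitely many times. -/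
structure InfProof (c : Bool) : Type where
  node : List Bool → Option (Sequent × RuleTag)
  root_isSome : (node []).isSome
  closed : ∀ (p : List Bool) (i : Bool), node p = none → node (p ++ [i]) = none
  correct : ∀ (p : List Bool) (s : Sequent) (r : RuleTag), node p = some (s, r) →
    Rules c s r ((node (p ++ [false])).map Prod.fst) ((node (p ++ [true])).map Prod.fst)
  guard : ∀ f : ℕ → Bool, (∀ n : ℕ, (node ((List.range n).map f)).isSome) →
    ∀ N : ℕ, ∃ n : ℕ, N ≤ n ∧ f n = true ∧
      (node ((List.range n).map f)).map Prod.snd = some RuleTag.box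

/-- The sequent at the root of an ∞-proof. -/
def rootSeq {c : Bool} (π : InfProof c) : Sequent :=
  ((π.node []).getD (((0 : Multiset Fml), (0 : Multiset Fml)), RuleTag.ax)).1

/-- A sequent is provable in `Grz_∞ (+ cut)` if it has an ∞-proof with that
sequent at the root. -/
def ProvableInf (c : Bool) (s : Sequent) : Prop := ∃ π : InfProof c, rootSeq π = s

/-- The number of right premises of the rule `(□)` strictly below the node
addressed by `p` in the ∞-proof `π`. -/
def countBR {c : Bool} (π : InfProof c) (p : List Bool) : ℕ :=
  ((List.range p.length).filter fun i =>
    p.getD i false && decide ((π.node (p.take i)).map Prod.snd = some RuleTag.box)).length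

/-- `Frag n π τ` means that the `n`-fragments of `π` and `τ` coincide
(`π ∼_n τ`): the trees agree on every node lying strictly before the `n`-th
right premise of `(□)` on its branch. -/
def Frag {c : Bool} (n : ℕ) (π τ : InfProof c) : Prop :=
  ∀ p : List Bool, countBR π p < n → π.node p = τ.node p

/-- The local pheight `|π|`: the length of the longest branch in the main
(1-)fragment of `π`. -/
noncomputable def pheight {c : Bool} (π : InfProof c) : ℕ :=
  sSup { n : ℕ | ∃ p : List Bool, p.length = n ∧ (π.node p).isSome ∧ countBR π p = 0 }

/-- Membership in `P_n`: the ∞-proof contains no applications of the cut rule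
in its `n`-fragment. -/
def CutFreeIn {c : Bool} (n : ℕ) (π : InfProof c) : Prop :=
  ∀ p : List Bool, countBR π p < n → (π.node p).map Prod.snd ≠ some RuleTag.cut

/-- A non-expansive mapping on ∞-proofs. -/
def NonExp {c : Bool} (u : InfProof c → InfProof c) : Prop :=
  ∀ (n : ℕ) (π π' : InfProof c), Frag n π π' → Frag n (u π) (u π')

/-- An adequate mapping on ∞-proofs: it preserves each `P_n`. -/
def Adequate {c : Bool} (u : InfProof c → InfProof c) : Prop :=
  ∀ (n : ℕ) (π : InfProof c), CutFreeIn n π → CutFreeIn n (u π)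

namespace Inversion

open List

/-! ### Multiset helpers -/

lemma erase_cons_of_mem {x : Fml} (y : Fml) {s : Multiset Fml} (h : x ∈ s) :
    (y ::ₘ s).erase x = y ::ₘ s.erase x :=
  Multiset.erase_cons_tail_of_mem h

/-! ### countBR as a function of the node assignment -/

/-- `countBR` as a function of the raw node assignment. -/
def countBRN (g : List Bool → Option (Sequent × RuleTag)) (p : List Bool) : ℕ :=
  ((List.range p.length).filter fun i =>
    p.getD i false && decide ((g (p.take i)).map Prod.snd = some RuleTag.box)).length

lemma countBR_eq_countBRN {c : Bool} (π : InfProof c) (p : List Bool) :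
    countBR π p = countBRN π.node p := rfl

@[simp] lemma countBRN_nil (g : List Bool → Option (Sequent × RuleTag)) :
    countBRN g [] = 0 := rfl

lemma countBRN_snoc (g : List Bool → Option (Sequent × RuleTag)) (p : List Bool) (i : Bool) :
    countBRN g (p ++ [i]) =
      countBRN g p + (if i = true ∧ (g p).map Prod.snd = some RuleTag.box then 1 else 0) := by
  unfold countBRN
  have h1 : (p ++ [i]).length = p.length + 1 := by simp
  rw [h1, List.range_succ, List.filter_append, List.length_append]
  congr 1
  · apply congrArg List.length
    apply List.filter_congr
    intro a ha
    have ha' : a < p.length := List.mem_range.mp ha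
    have e1 : (p ++ [i]).getD a false = p.getD a false := by
      simp [List.getD, List.getElem?_append, ha']
    have e2 : (p ++ [i]).take a = p.take a :=
      List.take_append_of_le_length (le_of_lt ha')
    rw [e1, e2]
  · rw [List.filter_singleton]
    have e1 : (p ++ [i]).getD p.length false = i := by simp [List.getD]
    have e2 : (p ++ [i]).take p.length = p := by simp
    rw [e1, e2]
    by_cases hb : (g p).map Prod.snd = some RuleTag.box <;> cases i <;> simp [hb]

lemma countBRN_le_append (g : List Bool → Option (Sequent × RuleTag)) (p l : List Bool) :
    countBRN g p ≤ countBRN g (p ++ l) := by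
  induction l using List.reverseRecOn with
  | nil => simp
  | append_singleton l i ih =>
    rw [← List.append_assoc, countBRN_snoc]
    exact le_trans ih (Nat.le_add_right _ _)

lemma countBRN_take_le (g : List Bool → Option (Sequent × RuleTag)) (p : List Bool) (k : ℕ) :
    countBRN g (p.take k) ≤ countBRN g p := by
  conv_rhs => rw [← List.take_append_drop k p]
  exact countBRN_le_append g _ _

/-! ### node basics -/

lemma isSome_of_append {c : Bool} (π : InfProof c) (p l : List Bool)
    (h : (π.node (p ++ l)).isSome) : (π.node p).isSome := by
  induction l using List.reverseRecOn with
  | nil => simpa using h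
  | append_singleton l i ih =>
    apply ih
    rw [← List.append_assoc] at h
    by_contra hn
    rw [π.closed (p ++ l) i (Option.not_isSome_iff_eq_none.mp hn)] at h
    simp at h

/-! ### the set of lengths of nodes in the 1-fragment is bounded (König) -/

lemma bddAbove_fragment {c : Bool} (π : InfProof c) :
    BddAbove {n : ℕ | ∃ p : List Bool, p.length = n ∧ (π.node p).isSome ∧ countBR π p = 0} := by
  by_contra hb
  classical
  set T : Set (List Bool) := {p | (π.node p).isSome ∧ countBRN π.node p = 0} with hT
  have hmemT : ∀ p, p ∈ T ↔ (π.node p).isSome ∧ countBRN π.node p = 0 := fun p => Iff.rfl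
  -- T is infinite
  have hTinf : T.Infinite := by
    intro hfin
    apply hb
    obtain ⟨M, hM⟩ := (hfin.image List.length).bddAbove
    refine ⟨M, ?_⟩
    rintro n ⟨p, hp, h1, h2⟩
    exact hM ⟨p, ⟨h1, h2⟩, hp⟩
  -- T is closed under prefixes
  have hpref : ∀ p l : List Bool, (p ++ l) ∈ T → p ∈ T := by
    rintro p l ⟨h1, h2⟩
    refine ⟨isSome_of_append π p l h1, ?_⟩
    have := countBRN_le_append π.node p l
    omega
  -- extension step
  have key : ∀ p : List Bool, {q | q ∈ T ∧ p <+: q}.Infinite →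
      ∃ i : Bool, {q | q ∈ T ∧ (p ++ [i]) <+: q}.Infinite := by
    intro p hp
    by_contra hno
    push_neg at hno
    have hfin : ∀ i : Bool, {q | q ∈ T ∧ (p ++ [i]) <+: q}.Finite :=
      fun i => hno i
    apply hp
    have hsub : {q | q ∈ T ∧ p <+: q} ⊆
        {p} ∪ ({q | q ∈ T ∧ (p ++ [false]) <+: q} ∪ {q | q ∈ T ∧ (p ++ [true]) <+: q}) := by
      rintro q ⟨hqT, l, rfl⟩
      cases l with
      | nil => left; simp
      | cons j l' =>
        right
        cases j
        · left; exact ⟨hqT, l', by simp⟩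
        · right; exact ⟨hqT, l', by simp⟩
    exact Set.Finite.subset (((Set.finite_singleton p).union ((hfin false).union (hfin true)))) hsub
  choose pick hpick using key
  -- build the branch
  let g : ℕ → List Bool := fun n =>
    Nat.rec [] (fun _ q => if h : {q' | q' ∈ T ∧ q <+: q'}.Infinite then q ++ [pick q h] else q) n
  have hg0 : g 0 = [] := rfl
  have hgs : ∀ n, g (n + 1) =
      if h : {q' | q' ∈ T ∧ g n <+: q'}.Infinite then g n ++ [pick (g n) h] else g n := fun n => rfl
  have hinf : ∀ n, {q' | q' ∈ T ∧ g n <+: q'}.Infinite := by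
    intro n
    induction n with
    | zero =>
      have : {q' | q' ∈ T ∧ g 0 <+: q'} = T := by
        ext q; simp [hg0]
      rw [this]; exact hTinf
    | succ n ih =>
      rw [hgs n, dif_pos ih]
      exact hpick (g n) ih
  have hglen : ∀ n, (g n).length = n := by
    intro n
    induction n with
    | zero => rfl
    | succ n ih => rw [hgs n, dif_pos (hinf n)]; simp [ih]
  have hgstep : ∀ n, g (n + 1) = g n ++ [pick (g n) (hinf n)] := by
    intro n; rw [hgs n, dif_pos (hinf n)]
  -- g n belongs to T
  have hgT : ∀ n, g n ∈ T := by
    intro n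
    obtain ⟨q, ⟨hqT, l, rfl⟩⟩ := (hinf n).nonempty
    exact hpref _ _ hqT
  -- the branch function
  let f : ℕ → Bool := fun n => (g (n + 1)).getD n false
  have hgf : ∀ n, g n = (List.range n).map f := by
    intro n
    induction n with
    | zero => rfl
    | succ n ih =>
      have hfn : f n = pick (g n) (hinf n) := by
        show (g (n + 1)).getD n false = _
        rw [hgstep n]
        simp [List.getD, List.getElem?_append_right, hglen n]
      rw [List.range_succ, List.map_append, hgstep n, ← ih, List.map_singleton, hfn]
  have hsome : ∀ n, (π.node ((List.range n).map f)).isSome := by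
    intro n; rw [← hgf n]; exact (hgT n).1
  obtain ⟨n, -, hft, hbox⟩ := π.guard f hsome 0
  have h1 : countBRN π.node (g (n + 1)) = 0 := (hgT (n + 1)).2
  rw [hgf (n + 1), List.range_succ, List.map_append] at h1
  simp only [List.map_singleton] at h1
  rw [countBRN_snoc] at h1
  rw [if_pos ⟨hft, hbox⟩] at h1
  omega

/-! ### Generic one-formula transformations of ∞-proofs -/

/-- The data of a one-occurrence transformation. -/
structure Spec where
  F : Sequent → Sequent
  memB : Sequent → Bool
  t0 : RuleTag
  dir : Bool

/-- The correctness conditions for a spec. -/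
def Spec.Good (S : Spec) : Prop :=
  (S.t0 = RuleTag.box → S.dir = false) ∧
  ∀ s r o₁ o₂, Rules true s r o₁ o₂ → S.memB s = true →
    ¬(r = S.t0 ∧ (if S.dir then o₂ else o₁) = some (S.F s)) →
    (Rules true (S.F s) r (o₁.map S.F)
        (if r = RuleTag.box then o₂ else o₂.map S.F) ∧
     (∀ s₁, o₁ = some s₁ → S.memB s₁ = true) ∧
     (r ≠ RuleTag.box → ∀ s₂, o₂ = some s₂ → S.memB s₂ = true))

variable (S : Spec)

/-- Does the tracked occurrence get rerouted at node `q`? -/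
def trigB (π : InfProof true) (q : List Bool) : Bool :=
  ((π.node q).map fun x =>
    decide (x.2 = S.t0) &&
      decide ((π.node (q ++ [S.dir])).map Prod.fst = some (S.F x.1))).getD false

/-- Does the active mode survive going to premise `i` from node `q`? -/
def stepA (π : InfProof true) (q : List Bool) (i a : Bool) : Bool :=
  a && !(decide ((π.node q).map Prod.snd = some RuleTag.box) && i)

/-- Normalisation of a walking state: skip a rerouted node. -/
def normSt (π : InfProof true) (st : List Bool × Bool) : List Bool × Bool :=
  if st.2 && trigB S π st.1 then (st.1 ++ [S.dir], false) else st

def walkAux (π : InfProof true) : List Bool × Bool → List Bool → List Bool × Bool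
  | st, [] => st
  | st, i :: l => walkAux π (normSt S π (st.1 ++ [i], stepA π st.1 i st.2)) l

/-- The position in `π` (and the active mode) corresponding to a position in the
transformed proof. -/
def walk (π : InfProof true) (p : List Bool) : List Bool × Bool :=
  walkAux S π (normSt S π ([], S.memB (rootSeq π))) p

lemma walkAux_append (π : InfProof true) (st : List Bool × Bool) (l₁ l₂ : List Bool) :
    walkAux S π st (l₁ ++ l₂) = walkAux S π (walkAux S π st l₁) l₂ := by
  induction l₁ generalizing st with
  | nil => rfl
  | cons i l ih => simp only [List.cons_append, walkAux]; exact ih _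

lemma walk_append (π : InfProof true) (p l : List Bool) :
    walk S π (p ++ l) = walkAux S π (walk S π p) l := by
  unfold walk; rw [walkAux_append]

lemma walk_snoc (π : InfProof true) (p : List Bool) (i : Bool) :
    walk S π (p ++ [i]) =
      normSt S π ((walk S π p).1 ++ [i], stepA π (walk S π p).1 i (walk S π p).2) := by
  rw [walk_append]; rfl

@[simp] lemma stepA_false (π : InfProof true) (q : List Bool) (i : Bool) :
    stepA π q i false = false := rfl

@[simp] lemma normSt_false (π : InfProof true) (q : List Bool) :
    normSt S π (q, false) = (q, false) := by simp [normSt]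

lemma walkAux_false (π : InfProof true) (q : List Bool) (l : List Bool) :
    walkAux S π (q, false) l = (q ++ l, false) := by
  induction l generalizing q with
  | nil => simp [walkAux]
  | cons i l ih =>
    show walkAux S π (normSt S π (q ++ [i], stepA π q i false)) l = _
    rw [stepA_false, normSt_false, ih]
    simp

lemma walk_false_append (π : InfProof true) (p l : List Bool)
    (h : (walk S π p).2 = false) :
    walk S π (p ++ l) = ((walk S π p).1 ++ l, false) := by
  rw [walk_append]
  have : walk S π p = ((walk S π p).1, false) := by
    rw [← h]
  rw [this, walkAux_false]

lemma normSt_eq (π : InfProof true) (st : List Bool × Bool) :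
    normSt S π st = st ∨
      (st.2 = true ∧ trigB S π st.1 = true ∧ normSt S π st = (st.1 ++ [S.dir], false)) := by
  unfold normSt
  by_cases h : (st.2 && trigB S π st.1) = true
  · right
    obtain ⟨h1, h2⟩ := Bool.and_eq_true_iff.mp h
    exact ⟨h1, h2, by rw [if_pos h]⟩
  · left; rw [if_neg h]

lemma normSt_act (π : InfProof true) (st : List Bool × Bool)
    (h : (normSt S π st).2 = true) :
    normSt S π st = st ∧ st.2 = true ∧ trigB S π st.1 = false := by
  unfold normSt at h ⊢
  by_cases hc : (st.2 && trigB S π st.1) = true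
  · rw [if_pos hc] at h; exact absurd h (by simp)
  · rw [if_neg hc] at h ⊢
    refine ⟨rfl, h, ?_⟩
    rw [h] at hc
    simpa using hc

lemma trigB_true {π : InfProof true} {q : List Bool} (h : trigB S π q = true) :
    ∃ s, π.node q = some (s, S.t0) ∧
      (π.node (q ++ [S.dir])).map Prod.fst = some (S.F s) := by
  unfold trigB at h
  rcases hn : π.node q with _ | ⟨s, r⟩ <;> rw [hn] at h
  · simp at h
  · simp only [Option.map_some, Option.getD_some, Bool.and_eq_true, decide_eq_true_eq] at h
    exact ⟨s, by simp [hn, h.1], h.2⟩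

lemma trigB_isSome {π : InfProof true} {q : List Bool} (h : trigB S π q = true) :
    (π.node (q ++ [S.dir])).isSome := by
  obtain ⟨s, -, h2⟩ := trigB_true S h
  rcases hn : π.node (q ++ [S.dir]) with _ | x
  · rw [hn] at h2; simp at h2
  · simp
  
lemma trigB_false {π : InfProof true} {q : List Bool} {s : Sequent} {r : RuleTag}
    (hn : π.node q = some (s, r)) (h : trigB S π q = false) :
    ¬(r = S.t0 ∧ (π.node (q ++ [S.dir])).map Prod.fst = some (S.F s)) := by
  rintro ⟨h1, h2⟩
  unfold trigB at h
  rw [hn] at h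
  simp [h1, h2] at h

lemma trigB_none {π : InfProof true} {q : List Bool} (hn : π.node q = none) :
    trigB S π q = false := by
  unfold trigB; rw [hn]; rfl

/-- The node assignment of the transformed proof. -/
def uNode (π : InfProof true) (p : List Bool) : Option (Sequent × RuleTag) :=
  (π.node (walk S π p).1).map fun x => (if (walk S π p).2 then S.F x.1 else x.1, x.2)

lemma uNode_snd (π : InfProof true) (p : List Bool) :
    (uNode S π p).map Prod.snd = (π.node (walk S π p).1).map Prod.snd := by
  unfold uNode; rcases π.node (walk S π p).1 with _ | x <;> rfl

lemma uNode_isSome (π : InfProof true) (p : List Bool) :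
    (uNode S π p).isSome = (π.node (walk S π p).1).isSome := by
  unfold uNode; rcases π.node (walk S π p).1 with _ | x <;> rfl

/-- The mode invariant along the walk. -/
lemma walk_inv (hS : S.Good) (π : InfProof true) (p : List Bool)
    (h : (walk S π p).2 = true) :
    trigB S π (walk S π p).1 = false ∧
      ∀ s r, π.node (walk S π p).1 = some (s, r) → S.memB s = true := by
  induction p using List.reverseRecOn with
  | nil =>
    have hw : walk S π [] = normSt S π ([], S.memB (rootSeq π)) := rfl
    rw [hw] at h ⊢
    obtain ⟨he, h2, h3⟩ := normSt_act S π _ h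
    rw [he]
    refine ⟨h3, ?_⟩
    intro s r hn
    have : rootSeq π = s := by unfold rootSeq; rw [hn]; rfl
    rw [← this]; exact h2
  | append_singleton p i ih =>
    rw [walk_snoc] at h ⊢
    obtain ⟨he, h2, h3⟩ := normSt_act S π _ h
    rw [he]
    simp only at h3
    refine ⟨h3, ?_⟩
    intro s' r' hn'
    -- the parent node
    have ha : (walk S π p).2 = true := by
      rcases Bool.dichotomy (walk S π p).2 with hh | hh
      · rw [hh] at h2; simp [stepA] at h2
      · exact hh
    obtain ⟨htrig, hmem⟩ := ih ha
    have hsome : (π.node (walk S π p).1).isSome :=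
      isSome_of_append π _ [i] (by rw [hn']; rfl)
    rcases hn : π.node (walk S π p).1 with _ | ⟨s, r⟩
    · rw [hn] at hsome; simp at hsome
    · have hmems : S.memB s = true := hmem s r hn
      have hrul := π.correct _ s r hn
      have hntrig := trigB_false S hn htrig
      have hntrig' : ¬(r = S.t0 ∧
          (if S.dir then ((π.node ((walk S π p).1 ++ [true])).map Prod.fst)
            else ((π.node ((walk S π p).1 ++ [false])).map Prod.fst)) = some (S.F s)) := by
        rcases Bool.dichotomy S.dir with hd | hd <;> rw [hd] <;> rw [hd] at hntrig <;>
          simpa using hntrig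
      obtain ⟨-, hm1, hm2⟩ := hS.2 s r _ _ hrul hmems hntrig'
      cases i
      · exact hm1 s' (by rw [hn']; rfl)
      · -- i = true : the rule cannot be (□) since the mode survived
        have hrbox : r ≠ RuleTag.box := by
          intro hr
          rw [ha] at h2
          unfold stepA at h2
          rw [hn, hr] at h2
          simp at h2
        exact hm2 hrbox s' (by rw [hn']; rfl)

/-- Characterisation of the sequents at the children of a node of the
transformed proof. -/
lemma uNode_child_fst (π : InfProof true) (p : List Bool) (i : Bool) :
    (uNode S π (p ++ [i])).map Prod.fst =
      if stepA π (walk S π p).1 i (walk S π p).2 = true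
      then ((π.node ((walk S π p).1 ++ [i])).map Prod.fst).map S.F
      else (π.node ((walk S π p).1 ++ [i])).map Prod.fst := by
  set q := (walk S π p).1
  set ai := stepA π q i (walk S π p).2 with hai
  have hw : walk S π (p ++ [i]) = normSt S π (q ++ [i], ai) := walk_snoc S π p i
  rcases Bool.dichotomy ai with ha | ha
  · rw [ha, if_neg (by simp)]
    rw [ha] at hw
    rw [normSt_false] at hw
    unfold uNode
    rw [hw]
    rcases π.node (q ++ [i]) with _ | x <;> rfl
  · rw [ha, if_pos rfl]
    rw [ha] at hw
    by_cases htr : trigB S π (q ++ [i]) = true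
    · have hw2 : walk S π (p ++ [i]) = ((q ++ [i]) ++ [S.dir], false) := by
        rw [hw]; unfold normSt; rw [if_pos (by simp [htr])]
      obtain ⟨s, hn, hfst⟩ := trigB_true S htr
      unfold uNode
      rw [hw2]
      simp only
      rw [hn]
      rcases hn2 : π.node ((q ++ [i]) ++ [S.dir]) with _ | x
      · rw [hn2] at hfst; simp at hfst
      · rw [hn2] at hfst
        simp only [Option.map_some] at hfst
        simpa using hfst
    · have hw2 : walk S π (p ++ [i]) = (q ++ [i], true) := by
        rw [hw]; unfold normSt
        rw [if_neg (by simp [htr])]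
    
      unfold uNode
      rw [hw2]
      rcases π.node (q ++ [i]) with _ | x <;> rfl

lemma trig_dir_not_box (hS : S.Good) {π : InfProof true} {q : List Bool}
    (htr : trigB S π q = true) :
    ¬(S.dir = true ∧ (π.node q).map Prod.snd = some RuleTag.box) := by
  obtain ⟨s, hn, -⟩ := trigB_true S htr
  rintro ⟨hd, hb⟩
  rw [hn] at hb
  simp only [Option.map_some, Option.some.injEq] at hb
  rw [hS.1 hb] at hd
  cases hd

lemma uNode_root_isSome (π : InfProof true) : (uNode S π []).isSome := by
  rw [uNode_isSome]
  have hw : walk S π [] = normSt S π ([], S.memB (rootSeq π)) := rfl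
  rcases normSt_eq S π ([], S.memB (rootSeq π)) with he | ⟨-, htr, he⟩
  · rw [hw, he]; exact π.root_isSome
  · rw [hw, he]; exact trigB_isSome S htr

lemma uNode_closed (π : InfProof true) (p : List Bool) (i : Bool)
    (h : uNode S π p = none) : uNode S π (p ++ [i]) = none := by
  have hqn : π.node (walk S π p).1 = none := by
    unfold uNode at h
    rcases hn : π.node (walk S π p).1 with _ | x
    · rfl
    · rw [hn] at h; simp at h
  have hn2 : π.node ((walk S π p).1 ++ [i]) = none := π.closed _ i hqn
  have hw : walk S π (p ++ [i]) =
      ((walk S π p).1 ++ [i], stepA π (walk S π p).1 i (walk S π p).2) := by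
    rw [walk_snoc]
    unfold normSt
    rw [if_neg]
    simp only
    rw [trigB_none S hn2]
    simp
  unfold uNode
  rw [hw]
  simp only
  rw [hn2]
  rfl

lemma uNode_correct (hS : S.Good) (π : InfProof true) (p : List Bool) (s' : Sequent)
    (r : RuleTag) (h : uNode S π p = some (s', r)) :
    Rules true s' r ((uNode S π (p ++ [false])).map Prod.fst)
      ((uNode S π (p ++ [true])).map Prod.fst) := by
  unfold uNode at h
  obtain ⟨⟨s, r0⟩, hn, hx⟩ := Option.map_eq_some_iff.mp h
  simp only at hx
  injection hx with hx1 hx2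
  subst hx2
  subst hx1
  have hrul := π.correct _ s r0 hn
  rw [uNode_child_fst, uNode_child_fst]
  rcases Bool.dichotomy (walk S π p).2 with ha | ha
  · rw [ha]
    simp only [Bool.false_eq_true, if_false, stepA_false]
    exact hrul
  · rw [ha]
    simp only [if_true]
    obtain ⟨htrig, hmem⟩ := walk_inv S hS π p ha
    have hmems := hmem s r0 hn
    have hntrig := trigB_false S hn htrig
    have hntrig' : ¬(r0 = S.t0 ∧
        (if S.dir then ((π.node ((walk S π p).1 ++ [true])).map Prod.fst)
          else ((π.node ((walk S π p).1 ++ [false])).map Prod.fst)) = some (S.F s)) := by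
      rcases Bool.dichotomy S.dir with hd | hd <;> rw [hd] <;> rw [hd] at hntrig <;>
        simpa using hntrig
    obtain ⟨hre, -, -⟩ := hS.2 s r0 _ _ hrul hmems hntrig'
    have hsf : stepA π (walk S π p).1 false true = true := by simp [stepA]
    by_cases hb : r0 = RuleTag.box
    · have hst : stepA π (walk S π p).1 true true = false := by
        unfold stepA
        rw [hn, hb]
        simp
      rw [if_pos hsf, if_neg (by simp [hst] : ¬stepA π (walk S π p).1 true true = true)]
      rw [if_pos hb] at hre
      exact hre
    · have hst : stepA π (walk S π p).1 true true = true := by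
        unfold stepA
        rw [hn]
        simp only [Option.map_some, Option.some.injEq, decide_eq_true_eq]
        rw [decide_eq_false hb]
        simp
      rw [if_pos hsf, if_pos hst]
      rw [if_neg hb] at hre
      exact hre

lemma walk_shape (π : InfProof true) (p : List Bool) :
    (walk S π p).1 = p ∨
      ∃ p₁ p₂ : List Bool, p = p₁ ++ p₂ ∧ walk S π p = (p₁ ++ S.dir :: p₂, false) := by
  induction p using List.reverseRecOn with
  | nil =>
    have hw : walk S π [] = normSt S π ([], S.memB (rootSeq π)) := rfl
    rcases normSt_eq S π ([], S.memB (rootSeq π)) with he | ⟨-, -, he⟩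
    · left; rw [hw, he]
    · right; exact ⟨[], [], rfl, by rw [hw, he]⟩
  | append_singleton p i ih =>
    rcases ih with h1 | ⟨p₁, p₂, hp, h2⟩
    · rw [walk_snoc]
      rcases normSt_eq S π ((walk S π p).1 ++ [i], stepA π (walk S π p).1 i (walk S π p).2)
        with he | ⟨-, -, he⟩
      · left; rw [he]; simp only; rw [h1]
      · right
        refine ⟨p ++ [i], [], by simp, ?_⟩
        rw [he]
        simp only
        rw [h1]
    · right
      have hf : walk S π (p ++ [i]) = ((walk S π p).1 ++ [i], false) :=
        walk_false_append S π p [i] (by rw [h2])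
      refine ⟨p₁, p₂ ++ [i], by rw [hp, List.append_assoc], ?_⟩
      rw [hf, h2]
      simp

lemma walk_length (π : InfProof true) (p : List Bool) :
    p.length ≤ (walk S π p).1.length := by
  rcases walk_shape S π p with h1 | ⟨p₁, p₂, hp, h2⟩
  · rw [h1]
  · rw [h2, hp]
    simp

lemma countBR_walk (hS : S.Good) (π : InfProof true) (p : List Bool) :
    countBRN (uNode S π) p = countBRN π.node (walk S π p).1 := by
  induction p using List.reverseRecOn with
  | nil =>
    rw [countBRN_nil]
    have hw : walk S π [] = normSt S π ([], S.memB (rootSeq π)) := rfl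
    rcases normSt_eq S π ([], S.memB (rootSeq π)) with he | ⟨-, htr, he⟩
    · rw [hw, he]; rfl
    · rw [hw, he]
      show 0 = countBRN π.node ([] ++ [S.dir])
      rw [countBRN_snoc, if_neg (trig_dir_not_box S hS htr)]
      rfl
  | append_singleton p i ih =>
    rw [countBRN_snoc, ih, walk_snoc]
    have htag : (uNode S π p).map Prod.snd = (π.node (walk S π p).1).map Prod.snd :=
      uNode_snd S π p
    rcases normSt_eq S π ((walk S π p).1 ++ [i], stepA π (walk S π p).1 i (walk S π p).2)
      with he | ⟨-, htr, he⟩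
    · rw [he]
      show _ = countBRN π.node ((walk S π p).1 ++ [i])
      rw [countBRN_snoc, htag]
    · rw [he]
      show _ = countBRN π.node (((walk S π p).1 ++ [i]) ++ [S.dir])
      rw [countBRN_snoc, countBRN_snoc, htag, if_neg (trig_dir_not_box S hS htr)]
      omega

lemma trigB_congr {n : ℕ} {π π' : InfProof true} (hS : S.Good) (hf : Frag n π π')
    (q : List Bool) (hq : countBRN π.node q < n) :
    trigB S π' q = trigB S π q := by
  have hnode : π'.node q = π.node q := (hf q hq).symm
  unfold trigB
  rw [hnode]
  rcases hn : π.node q with _ | ⟨s, r⟩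
  · rfl
  · simp only [Option.map_some, Option.getD_some]
    by_cases hr : r = S.t0
    · have hlt2 : countBRN π.node (q ++ [S.dir]) < n := by
        rw [countBRN_snoc]
        have hz : (if S.dir = true ∧ (π.node q).map Prod.snd = some RuleTag.box
            then 1 else 0) = 0 := by
          rw [if_neg]
          rintro ⟨hd, hb⟩
          rw [hn] at hb
          simp only [Option.map_some, Option.some.injEq] at hb
          rw [hr] at hb
          rw [hS.1 hb] at hd
          cases hd
        omega
      rw [hf _ hlt2]
    · simp [hr]

lemma frag_walk (hS : S.Good) {n : ℕ} (π π' : InfProof true) (hf : Frag n π π')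
    (p : List Bool) (hlt : countBRN π.node (walk S π p).1 < n) :
    walk S π' p = walk S π p := by
  induction p using List.reverseRecOn with
  | nil =>
    have h0 : countBRN π.node [] < n := lt_of_le_of_lt (Nat.zero_le _) hlt
    have hroot : π'.node [] = π.node [] := (hf [] h0).symm
    have hrs : rootSeq π' = rootSeq π := by unfold rootSeq; rw [hroot]
    show normSt S π' ([], S.memB (rootSeq π')) = normSt S π ([], S.memB (rootSeq π))
    rw [hrs]
    unfold normSt
    rw [trigB_congr S hS hf [] h0]
  | append_singleton p i ih =>
    have hle1 : countBRN π.node (walk S π p).1 ≤ countBRN π.node (walk S π (p ++ [i])).1 := by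
      rw [walk_snoc]
      rcases normSt_eq S π ((walk S π p).1 ++ [i], stepA π (walk S π p).1 i (walk S π p).2)
        with he | ⟨-, -, he⟩ <;> rw [he]
      · exact countBRN_le_append _ _ _
      · show _ ≤ countBRN π.node (((walk S π p).1 ++ [i]) ++ [S.dir])
        rw [List.append_assoc]
        exact countBRN_le_append _ _ _
    have hqlt : countBRN π.node (walk S π p).1 < n := lt_of_le_of_lt hle1 hlt
    have ihw := ih hqlt
    rw [walk_snoc S π', walk_snoc S π, ihw]
    have hnq : π'.node (walk S π p).1 = π.node (walk S π p).1 := (hf _ hqlt).symm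
    have hstep : stepA π' (walk S π p).1 i (walk S π p).2
        = stepA π (walk S π p).1 i (walk S π p).2 := by
      unfold stepA; rw [hnq]
    rw [hstep]
    have hlt2 : countBRN π.node ((walk S π p).1 ++ [i]) < n := by
      have hle2 : countBRN π.node ((walk S π p).1 ++ [i])
          ≤ countBRN π.node (walk S π (p ++ [i])).1 := by
        rw [walk_snoc]
        rcases normSt_eq S π ((walk S π p).1 ++ [i], stepA π (walk S π p).1 i (walk S π p).2)
          with he | ⟨-, -, he⟩
        · rw [he]
        · rw [he]
          show _ ≤ countBRN π.node (((walk S π p).1 ++ [i]) ++ [S.dir])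
          exact countBRN_le_append _ _ _
      exact lt_of_le_of_lt hle2 hlt
    unfold normSt
    rw [trigB_congr S hS hf _ hlt2]

lemma uFrag (hS : S.Good) {n : ℕ} (π π' : InfProof true) (hf : Frag n π π')
    (p : List Bool) (hlt : countBRN (uNode S π) p < n) : uNode S π p = uNode S π' p := by
  rw [countBR_walk S hS] at hlt
  have hw := frag_walk S hS π π' hf p hlt
  unfold uNode
  rw [hw, hf _ hlt]

lemma uNode_guard (hS : S.Good) (π : InfProof true) :
    ∀ f : ℕ → Bool, (∀ n : ℕ, (uNode S π ((List.range n).map f)).isSome) →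
    ∀ N : ℕ, ∃ n : ℕ, N ≤ n ∧ f n = true ∧
      (uNode S π ((List.range n).map f)).map Prod.snd = some RuleTag.box := by
  intro f hsome N
  by_cases htr : ∀ m : ℕ, (walk S π ((List.range m).map f)).1 = (List.range m).map f
  · have hsome' : ∀ n, (π.node ((List.range n).map f)).isSome := by
      intro n
      have h := hsome n
      rw [uNode_isSome, htr n] at h
      exact h
    obtain ⟨n, h1, h2, h3⟩ := π.guard f hsome' N
    refine ⟨n, h1, h2, ?_⟩
    rw [uNode_snd, htr n]
    exact h3
  · push_neg at htr
    obtain ⟨m, hm⟩ := htr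
    rcases walk_shape S π ((List.range m).map f) with h1 | ⟨p₁, p₂, hp, h2⟩
    · exact absurd h1 hm
    clear hm
    set k := p₁.length with hk
    have hmlen : ((List.range m).map f).length = m := by simp
    have hkm : k ≤ m := by
      have hl := congrArg List.length hp
      simp only [List.length_append, hmlen] at hl
      omega
    have hp₁ : p₁ = (List.range k).map f := by
      have h3 : (p₁ ++ p₂).take k = p₁ := List.take_left (l₁ := p₁) (l₂ := p₂)
      rw [← h3, ← hp, ← List.map_take, List.take_range, min_eq_left hkm]
    have hp₂ : p₂ = (((List.range m).map f).drop k) := by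
      have h3 : (p₁ ++ p₂).drop k = p₂ := List.drop_left (l₁ := p₁) (l₂ := p₂)
      rw [← h3, ← hp]
    set f' : ℕ → Bool := fun j => if j < k then f j else if j = k then S.dir else f (j - 1)
      with hf'
    have hfless : ∀ x, x < k → f' x = f x := by
      intro x hx
      simp only [hf']
      rw [if_pos hx]
    have hfk : f' k = S.dir := by
      simp [hf']
    have hfgt : ∀ x, k < x → f' x = f (x - 1) := by
      intro x hx
      simp only [hf']
      rw [if_neg (by omega), if_neg (by omega)]
    -- keyA
    have keyA : ∀ n, k ≤ n →
        (List.range (n + 1)).map f' = p₁ ++ S.dir :: (((List.range n).map f).drop k) := by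
      intro n hn
      induction n with
      | zero =>
        have hk0 : k = 0 := Nat.le_zero.mp hn
        have hp10 : p₁ = [] := by rw [hp₁, hk0]; rfl
        rw [hp10, hk0]
        show [f' 0] = [] ++ S.dir :: _
        rw [← hk0, hfk, hk0]
        simp
      | succ n ihn =>
        by_cases hkn : k ≤ n
        · have e1 := ihn hkn
          rw [List.range_succ, List.map_append, e1]
          conv_rhs => rw [List.range_succ, List.map_append]
          rw [List.drop_append_of_le_length (by simpa using hkn)]
          have e2 : f' (n + 1) = f n := by rw [hfgt (n + 1) (by omega)]; simp
          simp only [List.map_singleton]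
          rw [e2]
          simp
        · have hkn' : k = n + 1 := by omega
          rw [List.range_succ, List.map_append]
          simp only [List.map_singleton]
          have e2 : (List.range (n + 1)).map f' = (List.range (n + 1)).map f := by
            apply List.map_congr_left
            intro x hx
            exact hfless x (by have := List.mem_range.mp hx; omega)
          have e3 : f' (n + 1) = S.dir := by rw [← hkn', hfk]
          have e4 : ((List.range (n + 1)).map f).drop k = [] :=
            List.drop_eq_nil_of_le (by simp [hkn'])
          rw [e2, e3, e4, hp₁, hkn']
    -- keyB
    have keyB : ∀ n, m ≤ n → walk S π ((List.range n).map f) =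
        (p₁ ++ S.dir :: (((List.range n).map f).drop k), false) := by
      intro n hn
      have hsplit : (List.range n).map f =
          (List.range m).map f ++ (((List.range n).map f).drop m) := by
        conv_lhs => rw [← List.take_append_drop m ((List.range n).map f)]
        congr 1
        rw [← List.map_take, List.take_range, min_eq_left hn]
      have hw := walk_false_append S π ((List.range m).map f)
        (((List.range n).map f).drop m) (by rw [h2])
      rw [← hsplit] at hw
      rw [hw, h2]
      have hdrop : ((List.range n).map f).drop k =
          p₂ ++ (((List.range n).map f).drop m) := by
        conv_lhs => rw [hsplit]
        rw [List.drop_append_of_le_length (by rw [hmlen]; exact hkm), ← hp₂]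
      rw [hdrop]
      simp
    -- all nodes along f' exist
    have hBsome : ∀ j, (π.node ((List.range j).map f')).isSome := by
      have hfull : ∀ n, m ≤ n → (π.node ((List.range (n + 1)).map f')).isSome := by
        intro n hn
        rw [keyA n (le_trans hkm hn)]
        have h4 := hsome n
        rw [uNode_isSome, keyB n hn] at h4
        exact h4
      intro j
      by_cases hj : m + 1 ≤ j
      · obtain ⟨j', rfl⟩ : ∃ j', j = j' + 1 := ⟨j - 1, by omega⟩
        exact hfull j' (by omega)
      · have hsub : (List.range (m + 1)).map f' =
            (List.range j).map f' ++ (((List.range (m + 1)).map f').drop j) := by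
          conv_lhs => rw [← List.take_append_drop j ((List.range (m + 1)).map f')]
          congr 1
          rw [← List.map_take, List.take_range, min_eq_left (by omega)]
        have h5 : (π.node ((List.range (m + 1)).map f')).isSome := hfull m (le_refl m)
        rw [hsub] at h5
        exact isSome_of_append π _ _ h5
    obtain ⟨n, hn1, hn2, hn3⟩ := π.guard f' hBsome (N + m + 2)
    obtain ⟨n', rfl⟩ : ∃ n', n = n' + 1 := ⟨n - 1, by omega⟩
    refine ⟨n', by omega, ?_, ?_⟩
    · rw [hfgt (n' + 1) (by omega)] at hn2
      simpa using hn2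
    · rw [uNode_snd, keyB n' (by omega)]
      show (π.node (p₁ ++ S.dir :: (((List.range n').map f).drop k))).map Prod.snd = _
      rw [← keyA n' (by omega)]
      exact hn3

/-- The transformed ∞-proof. -/
def uProof (hS : S.Good) (π : InfProof true) : InfProof true where
  node := uNode S π
  root_isSome := uNode_root_isSome S π
  closed := uNode_closed S π
  correct := uNode_correct S hS π
  guard := uNode_guard S hS π

lemma uProof_nonExp (hS : S.Good) : NonExp (uProof S hS) := by
  intro n π π' hf p hlt
  exact uFrag S hS π π' hf p hlt

lemma uProof_adequate (hS : S.Good) : Adequate (uProof S hS) := by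
  intro n π hcf p hlt
  show (uNode S π p).map Prod.snd ≠ some RuleTag.cut
  rw [uNode_snd]
  apply hcf
  show countBRN π.node (walk S π p).1 < n
  rw [← countBR_walk S hS]
  exact hlt

lemma uProof_pheight (hS : S.Good) (π : InfProof true) :
    pheight (uProof S hS π) ≤ pheight π := by
  unfold pheight
  apply csSup_le
  · exact ⟨0, [], rfl, uNode_root_isSome S π, rfl⟩
  · rintro n ⟨p, hlen, hsm, hcnt⟩
    have hq : (π.node (walk S π p).1).isSome := by
      rw [show (uProof S hS π).node = uNode S π from rfl, uNode_isSome] at hsm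
      exact hsm
    have hcq : countBR π (walk S π p).1 = 0 := by
      show countBRN π.node (walk S π p).1 = 0
      rw [← countBR_walk S hS]
      exact hcnt
    have hlen2 : n ≤ (walk S π p).1.length := hlen ▸ walk_length S π p
    exact le_trans hlen2
      (le_csSup (bddAbove_fragment π) ⟨(walk S π p).1, rfl, hq, hcq⟩)

lemma uProof_rootSeq (hS : S.Good) (π : InfProof true)
    (hmem : S.memB (rootSeq π) = true) : rootSeq (uProof S hS π) = S.F (rootSeq π) := by
  have hw : walk S π [] = normSt S π ([], S.memB (rootSeq π)) := rfl
  rcases hrn : π.node [] with _ | ⟨s, r⟩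
  · have h := π.root_isSome; rw [hrn] at h; simp at h
  · have hrs : rootSeq π = s := by unfold rootSeq; rw [hrn]; rfl
    show ((uNode S π []).getD (((0 : Multiset Fml), (0 : Multiset Fml)), RuleTag.ax)).1 = _
    rcases normSt_eq S π ([], S.memB (rootSeq π)) with he | ⟨-, htr, he⟩
    · unfold uNode
      rw [hw, he]
      show ((((π.node []).map fun x =>
        (if S.memB (rootSeq π) then S.F x.1 else x.1, x.2)).getD _)).1 = _
      rw [hrn, hmem]
      simp [hrs]
    · obtain ⟨s0, hn0, hfst⟩ := trigB_true S htr
      have hs0 : s0 = s := by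
        rw [hrn] at hn0
        injection hn0 with h'
        exact (congrArg Prod.fst h').symm
      unfold uNode
      rw [hw, he]
      rcases hn2 : π.node ([] ++ [S.dir]) with _ | x
      · rw [hn2] at hfst; simp at hfst
      · rw [hn2] at hfst
        simp only [Option.map_some, Option.some.injEq] at hfst
        show (((some x).map fun y => (if false then S.F y.1 else y.1, y.2)).getD _).1 = _
        simp only [Option.map_some, Option.getD_some]
        show x.1 = S.F (rootSeq π)
        rw [hfst, hrs, ← hs0]

/-! ### The five inversion specs -/

lemma imp_notin_box (A B : Fml) (Φ : Multiset Fml) :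
    Fml.imp A B ∉ Φ.map Fml.box := by
  intro h
  obtain ⟨x, -, hx⟩ := Multiset.mem_map.mp h
  exact Fml.noConfusion hx

lemma mem_of_cons_of_ne {T X : Fml} {Γ : Multiset Fml} (h : T ∈ X ::ₘ Γ) (hne : T ≠ X) :
    T ∈ Γ := by
  rcases Multiset.mem_cons.mp h with h1 | h1
  · exact absurd h1 hne
  · exact h1

lemma mem_left_of_imp (A B : Fml) {Γ Φ : Multiset Fml}
    (h : Fml.imp A B ∈ Γ + Φ.map Fml.box) : Fml.imp A B ∈ Γ := by
  rcases Multiset.mem_add.mp h with h1 | h1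
  · exact h1
  · exact absurd h1 (imp_notin_box A B Φ)

def specLi (A B : Fml) : Spec where
  F := fun s => (B ::ₘ s.1.erase (Fml.imp A B), s.2)
  memB := fun s => decide (Fml.imp A B ∈ s.1)
  t0 := RuleTag.impL
  dir := false

lemma specLi_good (A B : Fml) : (specLi A B).Good := by
  refine ⟨fun _ => rfl, ?_⟩
  intro s r o₁ o₂ hr hm htr
  simp only [specLi, decide_eq_true_eq, Bool.false_eq_true, if_false] at hm htr ⊢
  cases hr with
  | ax c Γ Δ p =>
    have hT : Fml.imp A B ∈ Γ := mem_of_cons_of_ne hm (fun h => Fml.noConfusion h)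
    refine ⟨?_, fun s₁ h => by simp at h, fun _ s₂ h => by simp at h⟩
    simp only [Option.map_none, ite_self]
    rw [erase_cons_of_mem _ hT, Multiset.cons_swap]
    exact Rules.ax true _ _ p
  | axBot c Γ Δ =>
    have hT : Fml.imp A B ∈ Γ := mem_of_cons_of_ne hm (fun h => Fml.noConfusion h)
    refine ⟨?_, fun s₁ h => by simp at h, fun _ s₂ h => by simp at h⟩
    simp only [Option.map_none, ite_self]
    rw [erase_cons_of_mem _ hT, Multiset.cons_swap]
    exact Rules.axBot true _ _
  | impL c Γ Δ C D =>
    by_cases hT : Fml.imp A B ∈ Γ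
    · refine ⟨?_, ?_, ?_⟩
      · simp only [Option.map_some,
          if_neg (show ¬(RuleTag.impL = RuleTag.box) by decide)]
        rw [erase_cons_of_mem _ hT, erase_cons_of_mem _ hT,
          Multiset.cons_swap B (Fml.imp C D), Multiset.cons_swap B D]
        exact Rules.impL true _ _ C D
      · rintro s₁ h; injection h with h; subst h
        exact Multiset.mem_cons_of_mem hT
      · rintro - s₂ h; injection h with h; subst h
        exact hT
    · exfalso
      have hTe : Fml.imp A B = Fml.imp C D := by
        rcases Multiset.mem_cons.mp hm with h1 | h1
        · exact h1
        · exact absurd h1 hT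
      injection hTe with hA hB
      subst hA; subst hB
      exact htr ⟨rfl, by rw [Multiset.erase_cons_head]⟩
  | impR c Γ Δ C D =>
    refine ⟨?_, ?_, fun _ s₂ h => nomatch h⟩
    · simp only [Option.map_some,
        if_neg (show ¬(RuleTag.impR = RuleTag.box) by decide)]
      rw [erase_cons_of_mem _ hm, Multiset.cons_swap B C]
      exact Rules.impR true _ _ C D
    · rintro s₁ h; injection h with h; subst h
      exact Multiset.mem_cons_of_mem hm
  | refl c Γ Δ C =>
    have hT : Fml.imp A B ∈ Γ := mem_of_cons_of_ne hm (fun h => Fml.noConfusion h)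
    refine ⟨?_, ?_, fun _ s₂ h => nomatch h⟩
    · simp only [Option.map_some,
        if_neg (show ¬(RuleTag.refl = RuleTag.box) by decide)]
      rw [erase_cons_of_mem _ hm, erase_cons_of_mem _ hT,
        Multiset.cons_swap B C, Multiset.cons_swap B (Fml.box C)]
      exact Rules.refl true _ _ C
    · rintro s₁ h; injection h with h; subst h
      exact Multiset.mem_cons_of_mem hm
  | box c Γ Φ Δ C =>
    have hT : Fml.imp A B ∈ Γ := mem_left_of_imp A B hm
    refine ⟨?_, ?_, fun h => absurd rfl h⟩
    · rw [if_pos rfl]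
      simp only [Option.map_some]
      rw [Multiset.erase_add_left_pos _ hT, ← Multiset.cons_add]
      exact Rules.box true _ Φ Δ C
    · rintro s₁ h; injection h with h; subst h
      exact hm
  | cut Γ Δ C =>
    refine ⟨?_, ?_, ?_⟩
    · simp only [Option.map_some,
        if_neg (show ¬(RuleTag.cut = RuleTag.box) by decide)]
      rw [erase_cons_of_mem _ hm, Multiset.cons_swap B C]
      exact Rules.cut _ _ C
    · rintro s₁ h; injection h with h; subst h
      exact hm
    · rintro - s₂ h; injection h with h; subst h
      exact Multiset.mem_cons_of_mem hm

def specRi (A B : Fml) : Spec where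
  F := fun s => (s.1.erase (Fml.imp A B), A ::ₘ s.2)
  memB := fun s => decide (Fml.imp A B ∈ s.1)
  t0 := RuleTag.impL
  dir := true

lemma specRi_good (A B : Fml) : (specRi A B).Good := by
  refine ⟨fun h => RuleTag.noConfusion h, ?_⟩
  intro s r o₁ o₂ hr hm htr
  simp only [specRi, decide_eq_true_eq, if_true] at hm htr ⊢
  cases hr with
  | ax c Γ Δ p =>
    have hT : Fml.imp A B ∈ Γ := mem_of_cons_of_ne hm (fun h => Fml.noConfusion h)
    refine ⟨?_, fun s₁ h => by simp at h, fun _ s₂ h => by simp at h⟩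
    simp only [Option.map_none, ite_self]
    rw [erase_cons_of_mem _ hT, Multiset.cons_swap A (Fml.var p)]
    exact Rules.ax true _ _ p
  | axBot c Γ Δ =>
    have hT : Fml.imp A B ∈ Γ := mem_of_cons_of_ne hm (fun h => Fml.noConfusion h)
    refine ⟨?_, fun s₁ h => by simp at h, fun _ s₂ h => by simp at h⟩
    simp only [Option.map_none, ite_self]
    rw [erase_cons_of_mem _ hT]
    exact Rules.axBot true _ _
  | impL c Γ Δ C D =>
    by_cases hT : Fml.imp A B ∈ Γ
    · refine ⟨?_, ?_, ?_⟩
      · simp only [Option.map_some,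
          if_neg (show ¬(RuleTag.impL = RuleTag.box) by decide)]
        rw [erase_cons_of_mem _ hT, erase_cons_of_mem _ hT, Multiset.cons_swap A C]
        exact Rules.impL true _ _ C D
      · rintro s₁ h; injection h with h; subst h
        exact Multiset.mem_cons_of_mem hT
      · rintro - s₂ h; injection h with h; subst h
        exact hT
    · exfalso
      have hTe : Fml.imp A B = Fml.imp C D := by
        rcases Multiset.mem_cons.mp hm with h1 | h1
        · exact h1
        · exact absurd h1 hT
      injection hTe with hA hB
      subst hA; subst hB
      exact htr ⟨rfl, by rw [Multiset.erase_cons_head]⟩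
  | impR c Γ Δ C D =>
    refine ⟨?_, ?_, fun _ s₂ h => nomatch h⟩
    · simp only [Option.map_some,
        if_neg (show ¬(RuleTag.impR = RuleTag.box) by decide)]
      rw [erase_cons_of_mem _ hm, Multiset.cons_swap A (Fml.imp C D),
        Multiset.cons_swap A D]
      exact Rules.impR true _ _ C D
    · rintro s₁ h; injection h with h; subst h
      exact Multiset.mem_cons_of_mem hm
  | refl c Γ Δ C =>
    have hT : Fml.imp A B ∈ Γ := mem_of_cons_of_ne hm (fun h => Fml.noConfusion h)
    refine ⟨?_, ?_, fun _ s₂ h => nomatch h⟩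
    · simp only [Option.map_some,
        if_neg (show ¬(RuleTag.refl = RuleTag.box) by decide)]
      rw [erase_cons_of_mem _ hm, erase_cons_of_mem _ hT]
      exact Rules.refl true _ _ C
    · rintro s₁ h; injection h with h; subst h
      exact Multiset.mem_cons_of_mem hm
  | box c Γ Φ Δ C =>
    have hT : Fml.imp A B ∈ Γ := mem_left_of_imp A B hm
    refine ⟨?_, ?_, fun h => absurd rfl h⟩
    · rw [if_pos rfl]
      simp only [Option.map_some]
      rw [Multiset.erase_add_left_pos _ hT, Multiset.cons_swap A (Fml.box C),
        Multiset.cons_swap A C]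
      exact Rules.box true _ Φ _ C
    · rintro s₁ h; injection h with h; subst h
      exact hm
  | cut Γ Δ C =>
    refine ⟨?_, ?_, ?_⟩
    · simp only [Option.map_some,
        if_neg (show ¬(RuleTag.cut = RuleTag.box) by decide)]
      rw [erase_cons_of_mem _ hm, Multiset.cons_swap A C]
      exact Rules.cut _ _ C
    · rintro s₁ h; injection h with h; subst h
      exact hm
    · rintro - s₂ h; injection h with h; subst h
      exact Multiset.mem_cons_of_mem hm

def specI (A B : Fml) : Spec where
  F := fun s => (A ::ₘ s.1, B ::ₘ s.2.erase (Fml.imp A B))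
  memB := fun s => decide (Fml.imp A B ∈ s.2)
  t0 := RuleTag.impR
  dir := false

lemma specI_good (A B : Fml) : (specI A B).Good := by
  refine ⟨fun _ => rfl, ?_⟩
  intro s r o₁ o₂ hr hm htr
  simp only [specI, decide_eq_true_eq, Bool.false_eq_true, if_false] at hm htr ⊢
  cases hr with
  | ax c Γ Δ p =>
    have hT : Fml.imp A B ∈ Δ := mem_of_cons_of_ne hm (fun h => Fml.noConfusion h)
    refine ⟨?_, fun s₁ h => by simp at h, fun _ s₂ h => by simp at h⟩
    simp only [Option.map_none, ite_self]
    rw [erase_cons_of_mem _ hT, Multiset.cons_swap A (Fml.var p),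
      Multiset.cons_swap B (Fml.var p)]
    exact Rules.ax true _ _ p
  | axBot c Γ Δ =>
    refine ⟨?_, fun s₁ h => by simp at h, fun _ s₂ h => by simp at h⟩
    simp only [Option.map_none, ite_self]
    rw [Multiset.cons_swap A Fml.bot]
    exact Rules.axBot true _ _
  | impL c Γ Δ C D =>
    refine ⟨?_, ?_, ?_⟩
    · simp only [Option.map_some,
        if_neg (show ¬(RuleTag.impL = RuleTag.box) by decide)]
      rw [erase_cons_of_mem _ hm, Multiset.cons_swap A (Fml.imp C D),
        Multiset.cons_swap A D, Multiset.cons_swap B C]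
      exact Rules.impL true _ _ C D
    · rintro s₁ h; injection h with h; subst h
      exact hm
    · rintro - s₂ h; injection h with h; subst h
      exact Multiset.mem_cons_of_mem hm
  | impR c Γ Δ C D =>
    by_cases hT : Fml.imp A B ∈ Δ
    · refine ⟨?_, ?_, ?_⟩
      · simp only [Option.map_some,
          if_neg (show ¬(RuleTag.impR = RuleTag.box) by decide)]
        rw [erase_cons_of_mem _ hT, erase_cons_of_mem _ hT,
          Multiset.cons_swap B (Fml.imp C D), Multiset.cons_swap A C,
          Multiset.cons_swap B D]
        exact Rules.impR true _ _ C D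
      · rintro s₁ h; injection h with h; subst h
        exact Multiset.mem_cons_of_mem hT
      · rintro - s₂ h; exact nomatch h
    · exfalso
      have hTe : Fml.imp A B = Fml.imp C D := by
        rcases Multiset.mem_cons.mp hm with h1 | h1
        · exact h1
        · exact absurd h1 hT
      injection hTe with hA hB
      subst hA; subst hB
      exact htr ⟨rfl, by rw [Multiset.erase_cons_head]⟩
  | refl c Γ Δ C =>
    refine ⟨?_, ?_, fun _ s₂ h => nomatch h⟩
    · simp only [Option.map_some,
        if_neg (show ¬(RuleTag.refl = RuleTag.box) by decide)]
      rw [Multiset.cons_swap A (Fml.box C), Multiset.cons_swap A C,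
        Multiset.cons_swap A (Fml.box C)]
      exact Rules.refl true _ _ C
    · rintro s₁ h; injection h with h; subst h
      exact hm
  | box c Γ Φ Δ C =>
    have hT : Fml.imp A B ∈ Δ := mem_of_cons_of_ne hm (fun h => Fml.noConfusion h)
    refine ⟨?_, ?_, fun h => absurd rfl h⟩
    · rw [if_pos rfl]
      simp only [Option.map_some]
      rw [← Multiset.cons_add, erase_cons_of_mem _ hT, erase_cons_of_mem _ hT,
        Multiset.cons_swap B (Fml.box C), Multiset.cons_swap B C]
      exact Rules.box true _ Φ _ C
    · rintro s₁ h; injection h with h; subst h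
      exact Multiset.mem_cons_of_mem hT
  | cut Γ Δ C =>
    refine ⟨?_, ?_, ?_⟩
    · simp only [Option.map_some,
        if_neg (show ¬(RuleTag.cut = RuleTag.box) by decide)]
      rw [erase_cons_of_mem _ hm, Multiset.cons_swap B C, Multiset.cons_swap A C]
      exact Rules.cut _ _ C
    · rintro s₁ h; injection h with h; subst h
      exact Multiset.mem_cons_of_mem hm
    · rintro - s₂ h; injection h with h; subst h
      exact hm

def specBot : Spec where
  F := fun s => (s.1, s.2.erase Fml.bot)
  memB := fun s => decide (Fml.bot ∈ s.2)
  t0 := RuleTag.ax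
  dir := false

lemma specBot_good : specBot.Good := by
  refine ⟨fun _ => rfl, ?_⟩
  intro s r o₁ o₂ hr hm htr
  simp only [specBot, decide_eq_true_eq, Bool.false_eq_true, if_false] at hm htr ⊢
  cases hr with
  | ax c Γ Δ p =>
    have hT : Fml.bot ∈ Δ := mem_of_cons_of_ne hm (fun h => Fml.noConfusion h)
    refine ⟨?_, fun s₁ h => by simp at h, fun _ s₂ h => by simp at h⟩
    simp only [Option.map_none, ite_self]
    rw [erase_cons_of_mem _ hT]
    exact Rules.ax true _ _ p
  | axBot c Γ Δ =>
    refine ⟨?_, fun s₁ h => by simp at h, fun _ s₂ h => by simp at h⟩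
    simp only [Option.map_none, ite_self]
    exact Rules.axBot true _ _
  | impL c Γ Δ C D =>
    refine ⟨?_, ?_, ?_⟩
    · simp only [Option.map_some,
        if_neg (show ¬(RuleTag.impL = RuleTag.box) by decide)]
      rw [erase_cons_of_mem _ hm]
      exact Rules.impL true _ _ C D
    · rintro s₁ h; injection h with h; subst h
      exact hm
    · rintro - s₂ h; injection h with h; subst h
      exact Multiset.mem_cons_of_mem hm
  | impR c Γ Δ C D =>
    have hT : Fml.bot ∈ Δ := mem_of_cons_of_ne hm (fun h => Fml.noConfusion h)
    refine ⟨?_, ?_, fun _ s₂ h => nomatch h⟩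
    · simp only [Option.map_some,
        if_neg (show ¬(RuleTag.impR = RuleTag.box) by decide)]
      rw [erase_cons_of_mem _ hT, erase_cons_of_mem _ hT]
      exact Rules.impR true _ _ C D
    · rintro s₁ h; injection h with h; subst h
      exact Multiset.mem_cons_of_mem hT
  | refl c Γ Δ C =>
    refine ⟨?_, ?_, fun _ s₂ h => nomatch h⟩
    · simp only [Option.map_some,
        if_neg (show ¬(RuleTag.refl = RuleTag.box) by decide)]
      exact Rules.refl true _ _ C
    · rintro s₁ h; injection h with h; subst h
      exact hm
  | box c Γ Φ Δ C =>
    have hT : Fml.bot ∈ Δ := mem_of_cons_of_ne hm (fun h => Fml.noConfusion h)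
    refine ⟨?_, ?_, fun h => absurd rfl h⟩
    · rw [if_pos rfl]
      simp only [Option.map_some]
      rw [erase_cons_of_mem _ hT, erase_cons_of_mem _ hT]
      exact Rules.box true _ Φ _ C
    · rintro s₁ h; injection h with h; subst h
      exact Multiset.mem_cons_of_mem hT
  | cut Γ Δ C =>
    refine ⟨?_, ?_, ?_⟩
    · simp only [Option.map_some,
        if_neg (show ¬(RuleTag.cut = RuleTag.box) by decide)]
      rw [erase_cons_of_mem _ hm]
      exact Rules.cut _ _ C
    · rintro s₁ h; injection h with h; subst h
      exact Multiset.mem_cons_of_mem hm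
    · rintro - s₂ h; injection h with h; subst h
      exact hm

def specBox (A : Fml) : Spec where
  F := fun s => (s.1, A ::ₘ s.2.erase (Fml.box A))
  memB := fun s => decide (Fml.box A ∈ s.2)
  t0 := RuleTag.box
  dir := false

lemma specBox_good (A : Fml) : (specBox A).Good := by
  refine ⟨fun _ => rfl, ?_⟩
  intro s r o₁ o₂ hr hm htr
  simp only [specBox, decide_eq_true_eq, Bool.false_eq_true, if_false] at hm htr ⊢
  cases hr with
  | ax c Γ Δ p =>
    have hT : Fml.box A ∈ Δ := mem_of_cons_of_ne hm (fun h => Fml.noConfusion h)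
    refine ⟨?_, fun s₁ h => by simp at h, fun _ s₂ h => by simp at h⟩
    simp only [Option.map_none, ite_self]
    rw [erase_cons_of_mem _ hT, Multiset.cons_swap A (Fml.var p)]
    exact Rules.ax true _ _ p
  | axBot c Γ Δ =>
    refine ⟨?_, fun s₁ h => by simp at h, fun _ s₂ h => by simp at h⟩
    simp only [Option.map_none, ite_self]
    exact Rules.axBot true _ _
  | impL c Γ Δ C D =>
    refine ⟨?_, ?_, ?_⟩
    · simp only [Option.map_some,
        if_neg (show ¬(RuleTag.impL = RuleTag.box) by decide)]
      rw [erase_cons_of_mem _ hm, Multiset.cons_swap A C]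
      exact Rules.impL true _ _ C D
    · rintro s₁ h; injection h with h; subst h
      exact hm
    · rintro - s₂ h; injection h with h; subst h
      exact Multiset.mem_cons_of_mem hm
  | impR c Γ Δ C D =>
    have hT : Fml.box A ∈ Δ := mem_of_cons_of_ne hm (fun h => Fml.noConfusion h)
    refine ⟨?_, ?_, fun _ s₂ h => nomatch h⟩
    · simp only [Option.map_some,
        if_neg (show ¬(RuleTag.impR = RuleTag.box) by decide)]
      rw [erase_cons_of_mem _ hT, erase_cons_of_mem _ hT,
        Multiset.cons_swap A (Fml.imp C D), Multiset.cons_swap A D]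
      exact Rules.impR true _ _ C D
    · rintro s₁ h; injection h with h; subst h
      exact Multiset.mem_cons_of_mem hT
  | refl c Γ Δ C =>
    refine ⟨?_, ?_, fun _ s₂ h => nomatch h⟩
    · simp only [Option.map_some,
        if_neg (show ¬(RuleTag.refl = RuleTag.box) by decide)]
      exact Rules.refl true _ _ C
    · rintro s₁ h; injection h with h; subst h
      exact hm
  | box c Γ Φ Δ C =>
    by_cases hT : Fml.box A ∈ Δ
    · refine ⟨?_, ?_, fun h => absurd rfl h⟩
      · rw [if_pos rfl]
        simp only [Option.map_some]
        rw [erase_cons_of_mem _ hT, erase_cons_of_mem _ hT,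
          Multiset.cons_swap A (Fml.box C), Multiset.cons_swap A C]
        exact Rules.box true _ Φ _ C
      · rintro s₁ h; injection h with h; subst h
        exact Multiset.mem_cons_of_mem hT
    · exfalso
      have hTe : Fml.box A = Fml.box C := by
        rcases Multiset.mem_cons.mp hm with h1 | h1
        · exact h1
        · exact absurd h1 hT
      injection hTe with hA
      subst hA
      exact htr ⟨rfl, by rw [Multiset.erase_cons_head]⟩
  | cut Γ Δ C =>
    refine ⟨?_, ?_, ?_⟩
    · simp only [Option.map_some,
        if_neg (show ¬(RuleTag.cut = RuleTag.box) by decide)]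
      rw [erase_cons_of_mem _ hm, Multiset.cons_swap A C]
      exact Rules.cut _ _ C
    · rintro s₁ h; injection h with h; subst h
      exact Multiset.mem_cons_of_mem hm
    · rintro - s₂ h; injection h with h; subst h
      exact hm

end Inversion

/-- For any formulas `A` and `B`, the five inversion rules `li_{A→B}`,
`ri_{A→B}`, `i_{A→B}`, `i_⊥` and `li_{□A}` are strongly admissible in
`Grz_∞ + cut`: for each of them there is a non-expansive adequate mapping
`u : P → P` sending every ∞-proof of the premise to an ∞-proof of the
conclusion, with `|u(π)| ≤ |π|`. -/
theorem inversion_strongly_admissible (A B : Fml) :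
    (∃ u : InfProof true → InfProof true,
      NonExp u ∧ Adequate u ∧ (∀ π : InfProof true, pheight (u π) ≤ pheight π) ∧
      ∀ (π : InfProof true) (Γ Δ : Multiset Fml),
        rootSeq π = (Fml.imp A B ::ₘ Γ, Δ) → rootSeq (u π) = (B ::ₘ Γ, Δ)) ∧
    (∃ u : InfProof true → InfProof true,
      NonExp u ∧ Adequate u ∧ (∀ π : InfProof true, pheight (u π) ≤ pheight π) ∧
      ∀ (π : InfProof true) (Γ Δ : Multiset Fml),
        rootSeq π = (Fml.imp A B ::ₘ Γ, Δ) → rootSeq (u π) = (Γ, A ::ₘ Δ)) ∧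
    (∃ u : InfProof true → InfProof true,
      NonExp u ∧ Adequate u ∧ (∀ π : InfProof true, pheight (u π) ≤ pheight π) ∧
      ∀ (π : InfProof true) (Γ Δ : Multiset Fml),
        rootSeq π = (Γ, Fml.imp A B ::ₘ Δ) → rootSeq (u π) = (A ::ₘ Γ, B ::ₘ Δ)) ∧
    (∃ u : InfProof true → InfProof true,
      NonExp u ∧ Adequate u ∧ (∀ π : InfProof true, pheight (u π) ≤ pheight π) ∧
      ∀ (π : InfProof true) (Γ Δ : Multiset Fml),
        rootSeq π = (Γ, Fml.bot ::ₘ Δ) → rootSeq (u π) = (Γ, Δ)) ∧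
    (∃ u : InfProof true → InfProof true,
      NonExp u ∧ Adequate u ∧ (∀ π : InfProof true, pheight (u π) ≤ pheight π) ∧
      ∀ (π : InfProof true) (Γ Δ : Multiset Fml),
        rootSeq π = (Γ, Fml.box A ::ₘ Δ) → rootSeq (u π) = (Γ, A ::ₘ Δ)) := by
  refine ⟨?_, ?_, ?_, ?_, ?_⟩
  · refine ⟨Inversion.uProof _ (Inversion.specLi_good A B),
      Inversion.uProof_nonExp _ _, Inversion.uProof_adequate _ _,
      Inversion.uProof_pheight _ _, ?_⟩
    intro π Γ Δ hroot
    have hmem : (Inversion.specLi A B).memB (rootSeq π) = true := by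
      rw [hroot]; simp [Inversion.specLi]
    rw [Inversion.uProof_rootSeq _ _ _ hmem, hroot]
    simp [Inversion.specLi]
  · refine ⟨Inversion.uProof _ (Inversion.specRi_good A B),
      Inversion.uProof_nonExp _ _, Inversion.uProof_adequate _ _,
      Inversion.uProof_pheight _ _, ?_⟩
    intro π Γ Δ hroot
    have hmem : (Inversion.specRi A B).memB (rootSeq π) = true := by
      rw [hroot]; simp [Inversion.specRi]
    rw [Inversion.uProof_rootSeq _ _ _ hmem, hroot]
    simp [Inversion.specRi]
  · refine ⟨Inversion.uProof _ (Inversion.specI_good A B),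
      Inversion.uProof_nonExp _ _, Inversion.uProof_adequate _ _,
      Inversion.uProof_pheight _ _, ?_⟩
    intro π Γ Δ hroot
    have hmem : (Inversion.specI A B).memB (rootSeq π) = true := by
      rw [hroot]; simp [Inversion.specI]
    rw [Inversion.uProof_rootSeq _ _ _ hmem, hroot]
    simp [Inversion.specI]
  · refine ⟨Inversion.uProof _ Inversion.specBot_good,
      Inversion.uProof_nonExp _ _, Inversion.uProof_adequate _ _,
      Inversion.uProof_pheight _ _, ?_⟩
    intro π Γ Δ hroot
    have hmem : Inversion.specBot.memB (rootSeq π) = true := by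
      rw [hroot]; simp [Inversion.specBot]
    rw [Inversion.uProof_rootSeq _ _ _ hmem, hroot]
    simp [Inversion.specBot]
  · refine ⟨Inversion.uProof _ (Inversion.specBox_good A),
      Inversion.uProof_nonExp _ _, Inversion.uProof_adequate _ _,
      Inversion.uProof_pheight _ _, ?_⟩
    intro π Γ Δ hroot
    have hmem : (Inversion.specBox A).memB (rootSeq π) = true := by
      rw [hroot]; simp [Inversion.specBox]
    rw [Inversion.uProof_rootSeq _ _ _ hmem, hroot]
    simp [Inversion.specBox]
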